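/- Let Σ be a finite set of DTGDs, D a database, and q = ∃x φ(x) a Boolean CQ with φ quantifier-free and x of length k. Then D ∪ Σ ⊨ q if and only if there exists a finite set T ⊆ term(chase(D,Σ))^k such that chase(D,Σ) ⊨ ⋁_{t∈T} φ(t). -/

import Mathlib

set_option maxHeartbeats 1000000

/-- Terms: constants, nulls, and Skolem nulls `sk i v ts` determined by a
rule index `i`, an existential variable `v`, and the frontier terms `ts`. -/
inductive NTerm : Type where
  | const : ℕ → NTerm
  | null : ℕ → NTerm
  | sk : ℕ → ℕ → List NTerm → NTerm

/-- A fact: a relation symbol applied to a list of (ground) terms. -/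
structure DFact : Type where
  rel : ℕ
  args : List NTerm

/-- A (query or rule) atom: `Sum.inl v` is a variable, `Sum.inr c` a constant. -/
structure Atom : Type where
  rel : ℕ
  args : List (ℕ ⊕ ℕ)

/-- Apply a substitution (assignment of terms to variables) to an atom. -/
def applyAtom (h : ℕ → NTerm) (a : Atom) : DFact :=
  ⟨a.rel, a.args.map fun t => match t with
    | Sum.inl v => h v
    | Sum.inr c => NTerm.const c⟩

def mapDFact (g : NTerm → NTerm) (f : DFact) : DFact :=
  ⟨f.rel, f.args.map g⟩

/-- Active domain of an instance: all terms occurring in it. -/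
def adom (I : Set DFact) : Set NTerm := { t | ∃ f ∈ I, t ∈ f.args }

/-- A `C`-homomorphism from `I` to `J`: maps the facts of `I` into `J`
and fixes every constant in `C`. -/
def IsHom (C : Set ℕ) (g : NTerm → NTerm) (I J : Set DFact) : Prop :=
  (∀ f ∈ I, mapDFact g f ∈ J) ∧ ∀ c ∈ C, g (NTerm.const c) = NTerm.const c

/-- A Boolean conjunctive query: a finite conjunction of atoms,
all variables read existentially. -/
abbrev BCQ := List Atom

/-- `I ⊨ q`: some substitution maps the atoms of `q` into `I` (fixing constants). -/
def satCQ (I : Set DFact) (q : BCQ) : Prop :=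
  ∃ h : ℕ → NTerm, ∀ a ∈ q, applyAtom h a ∈ I

def cqConsts (q : BCQ) : Set ℕ := { c | ∃ a ∈ q, Sum.inr c ∈ a.args }

def cqVars (q : BCQ) : Set ℕ := { v | ∃ a ∈ q, Sum.inl v ∈ a.args }

/-- A database: a finite instance containing no nulls. -/
def IsDatabase (D : Set DFact) : Prop :=
  D.Finite ∧ ∀ f ∈ D, ∀ t ∈ f.args, ∃ c, t = NTerm.const c

def constsOf (I : Set DFact) : Set ℕ := { c | NTerm.const c ∈ adom I }

/-- A canonical disjunctive TGD: the head is a disjunction of atoms. -/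
structure DTGD : Type where
  body : List Atom
  head : List Atom

def atomVars (a : Atom) : List ℕ :=
  a.args.filterMap fun t => match t with
    | Sum.inl v => some v
    | Sum.inr _ => none

def DTGD.bodyVars (σ : DTGD) : List ℕ :=
  σ.body.foldr (fun a r => atomVars a ++ r) []

/-- `I` is a model of the DTGD `σ`. -/
def modelsDTGD (I : Set DFact) (σ : DTGD) : Prop :=
  ∀ h : ℕ → NTerm, (∀ a ∈ σ.body, applyAtom h a ∈ I) →
    ∃ h' : ℕ → NTerm, (∀ v ∈ σ.bodyVars, h' v = h v) ∧
      ∃ a ∈ σ.head, applyAtom h' a ∈ I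

/-- `D ∪ Σ ⊨ q` for a Boolean CQ `q` and a set of DTGDs. -/
def dEntailsCQ (Sg : List DTGD) (D : Set DFact) (q : BCQ) : Prop :=
  ∀ I : Set DFact, D ⊆ I → (∀ σ ∈ Sg, modelsDTGD I σ) → satCQ I q

/-- A nondeterministic fact is a (finite) disjunction of facts, viewed as a set. -/
def DTGD.frontier (σ : DTGD) : List ℕ :=
  ((σ.head.foldr (fun a r => atomVars a ++ r) []).filter (fun u => u ∈ σ.bodyVars))

def skolemSubD (i : ℕ) (σ : DTGD) (h : ℕ → NTerm) : ℕ → NTerm := fun v =>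
  if v ∈ σ.bodyVars then h v
  else NTerm.sk i v (σ.frontier.map h)

/-- One step of the nondeterministic chase: add every result of applying a rule
`σ` via `h` to a tuple of nondeterministic facts `Fs j` containing the body atoms. -/
def ndChaseStep (Sg : List DTGD) (NI : Set (Set DFact)) : Set (Set DFact) :=
  NI ∪ { G | ∃ i σ, Sg[i]? = some σ ∧ ∃ (h : ℕ → NTerm) (Fs : ℕ → Set DFact),
      (∀ j a, σ.body[j]? = some a → Fs j ∈ NI ∧ applyAtom h a ∈ Fs j) ∧
      G = { f | ∃ a ∈ σ.head, f = applyAtom (skolemSubD i σ h) a } ∪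
          { f | ∃ j a, σ.body[j]? = some a ∧ f ∈ Fs j ∧ f ≠ applyAtom h a } }

def ndChaseK (Sg : List DTGD) (D : Set DFact) : ℕ → Set (Set DFact)
  | 0 => (fun f => ({f} : Set DFact)) '' D
  | k + 1 => ndChaseStep Sg (ndChaseK Sg D k)

def ndChase (Sg : List DTGD) (D : Set DFact) : Set (Set DFact) :=
  ⋃ k, ndChaseK Sg D k

/-- `M` is a model of a nondeterministic instance: it meets every
nondeterministic fact. -/
def IsNdModel (NI : Set (Set DFact)) (M : Set DFact) : Prop :=
  ∀ F ∈ NI, (F ∩ M).Nonempty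

def ndTerms (NI : Set (Set DFact)) : Set NTerm :=
  { t | ∃ F ∈ NI, ∃ f ∈ F, t ∈ f.args }

def ndAtoms (NI : Set (Set DFact)) : Set DFact := ⋃₀ NI


/-! ### Auxiliary development -/

mutual
noncomputable def gmap (W : ℕ → ℕ → List NTerm → NTerm) : NTerm → NTerm
  | .const c => .const c
  | .null n => .null n
  | .sk i v ts => W i v (gmapL W ts)
noncomputable def gmapL (W : ℕ → ℕ → List NTerm → NTerm) : List NTerm → List NTerm
  | [] => []
  | t :: ts => gmap W t :: gmapL W ts
end

theorem gmapL_eq (W) (ts : List NTerm) : gmapL W ts = ts.map (gmap W) := by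
  induction ts with
  | nil => rfl
  | cons t ts ih => simp [gmapL, ih]

theorem gmap_sk (W) (i v : ℕ) (ts : List NTerm) :
    gmap W (NTerm.sk i v ts) = W i v (ts.map (gmap W)) := by
  rw [gmap, gmapL_eq]

theorem mapDFact_applyAtom (W) (h : ℕ → NTerm) (a : Atom) :
    mapDFact (gmap W) (applyAtom h a) = applyAtom (fun v => gmap W (h v)) a := by
  simp only [mapDFact, applyAtom, List.map_map]
  congr 1
  apply List.map_congr_left
  intro x _
  cases x with
  | inl v => rfl
  | inr c => rfl

theorem mem_atomVars {v : ℕ} {a : Atom} : v ∈ atomVars a ↔ Sum.inl v ∈ a.args := by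
  simp only [atomVars, List.mem_filterMap]
  constructor
  · rintro ⟨t, ht, he⟩
    cases t with
    | inl w => simp at he; subst he; exact ht
    | inr c => simp at he
  · intro hv; exact ⟨Sum.inl v, hv, rfl⟩

theorem mem_foldrVars {l : List Atom} {a : Atom} {v : ℕ} (ha : a ∈ l) (hv : v ∈ atomVars a) :
    v ∈ l.foldr (fun a r => atomVars a ++ r) [] := by
  induction l with
  | nil => simp at ha
  | cons b l ih =>
    simp only [List.foldr, List.mem_append]
    rcases ha with _ | ⟨_, h⟩
    · left; exact hv
    · right; exact ih h

theorem mem_frontier {σ : DTGD} {a : Atom} {v : ℕ} (ha : a ∈ σ.head) (hv : v ∈ atomVars a)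
    (hb : v ∈ σ.bodyVars) : v ∈ σ.frontier := by
  simp only [DTGD.frontier, List.mem_filter, decide_eq_true_eq]
  exact ⟨mem_foldrVars ha hv, hb⟩

theorem frontier_subset_bodyVars {σ : DTGD} {v : ℕ} (hv : v ∈ σ.frontier) : v ∈ σ.bodyVars := by
  simp only [DTGD.frontier, List.mem_filter, decide_eq_true_eq] at hv
  exact hv.2

theorem mem_bodyVars {σ : DTGD} {a : Atom} {v : ℕ} (ha : a ∈ σ.body) (hv : v ∈ atomVars a) :
    v ∈ σ.bodyVars := mem_foldrVars ha hv

theorem ndChaseK_mono (Sg : List DTGD) (D : Set DFact) {k l : ℕ} (hkl : k ≤ l) :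
    ndChaseK Sg D k ⊆ ndChaseK Sg D l := by
  induction l with
  | zero => rw [Nat.le_zero.mp hkl]
  | succ l ih =>
    rcases Nat.lt_or_ge k (l+1) with h | h
    · intro F hF
      exact Set.mem_union_left _ (ih (Nat.lt_succ_iff.mp h) hF)
    · rw [Nat.le_antisymm h hkl]

theorem ndChaseK_subset (Sg : List DTGD) (D : Set DFact) (k : ℕ) :
    ndChaseK Sg D k ⊆ ndChase Sg D := Set.subset_iUnion (ndChaseK Sg D) k

theorem ndChase_finite {Sg : List DTGD} {D : Set DFact} {F : Set DFact}
    (hF : F ∈ ndChase Sg D) : F.Finite := by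
  obtain ⟨_, ⟨k, rfl⟩, hF⟩ := hF
  induction k generalizing F with
  | zero =>
    obtain ⟨f, _, rfl⟩ := hF
    exact Set.finite_singleton f
  | succ k ih =>
    rcases hF with hF | ⟨i, σ, hσ, h, Fs, hFs, rfl⟩
    · exact ih hF
    · apply Set.Finite.union
      · have : {f | ∃ a ∈ σ.head, f = applyAtom (skolemSubD i σ h) a}
            = (fun a => applyAtom (skolemSubD i σ h) a) '' {a | a ∈ σ.head} := by
          ext f; simp [eq_comm]
        rw [this]
        exact (σ.head.finite_toSet).image _
      · have hsub : {f | ∃ j a, σ.body[j]? = some a ∧ f ∈ Fs j ∧ f ≠ applyAtom h a}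
            ⊆ ⋃ j ∈ Finset.range σ.body.length, Fs j := by
          rintro f ⟨j, a, hja, hf, _⟩
          have hj : j < σ.body.length := by
            by_contra hc
            rw [List.getElem?_eq_none (Nat.le_of_not_lt hc)] at hja
            cases hja
          exact Set.mem_biUnion (Finset.mem_range.mpr hj) hf
        apply Set.Finite.subset _ hsub
        apply Set.Finite.biUnion (Finset.range σ.body.length).finite_toSet
        intro j hj
        have hj' : j < σ.body.length := Finset.mem_range.mp hj
        have hja : σ.body[j]? = some (σ.body[j]'hj') := List.getElem?_eq_getElem hj'
        exact ih (hFs j _ hja).1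

/-! ### Soundness: from nd-model consequence to entailment -/

open Classical in
noncomputable def wChoose (Sg : List DTGD) (I : Set DFact) (i : ℕ) (u : List NTerm) :
    (ℕ → NTerm) × Atom :=
  if h : ∃ (p : (ℕ → NTerm) × Atom) (σ : DTGD), Sg[i]? = some σ ∧ p.2 ∈ σ.head ∧
      σ.frontier.map p.1 = u ∧ applyAtom p.1 p.2 ∈ I
  then h.choose else (fun _ => NTerm.const 0, ⟨0, []⟩)

noncomputable def gI (Sg : List DTGD) (I : Set DFact) : NTerm → NTerm :=
  gmap (fun i _v u => (wChoose Sg I i u).1 _v)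

theorem gI_const (Sg I c) : gI Sg I (NTerm.const c) = NTerm.const c := rfl

theorem wChoose_spec {Sg : List DTGD} {I : Set DFact} {i : ℕ} {u : List NTerm}
    (hex : ∃ (p : (ℕ → NTerm) × Atom) (σ' : DTGD), Sg[i]? = some σ' ∧ p.2 ∈ σ'.head ∧
      σ'.frontier.map p.1 = u ∧ applyAtom p.1 p.2 ∈ I) :
    ∃ (σ' : DTGD), Sg[i]? = some σ' ∧ (wChoose Sg I i u).2 ∈ σ'.head ∧
      σ'.frontier.map (wChoose Sg I i u).1 = u ∧
      applyAtom (wChoose Sg I i u).1 (wChoose Sg I i u).2 ∈ I := by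
  unfold wChoose
  rw [dif_pos hex]
  exact hex.choose_spec

/-- Key step: if all body atoms map into `I` under `gI ∘ h`, then the chosen head
atom maps into `I` and matches the skolem head under `gI`. -/
theorem gI_head_step {Sg : List DTGD} {I : Set DFact}
    (hmod : ∀ σ ∈ Sg, modelsDTGD I σ) {i : ℕ} {σ : DTGD} (hσ : Sg[i]? = some σ)
    {h : ℕ → NTerm} (hbody : ∀ a ∈ σ.body, applyAtom (fun v => gI Sg I (h v)) a ∈ I) :
    ∃ a ∈ σ.head, mapDFact (gI Sg I) (applyAtom (skolemSubD i σ h) a) ∈ I := by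
  have hσmem : σ ∈ Sg := by
    have : ∃ j, Sg[j]? = some σ := ⟨i, hσ⟩
    rwa [← List.mem_iff_getElem?] at this
  obtain ⟨h'', hagree, a, ha, haI⟩ := hmod σ hσmem (fun v => gI Sg I (h v)) hbody
  have hex : ∃ (p : (ℕ → NTerm) × Atom) (σ' : DTGD), Sg[i]? = some σ' ∧ p.2 ∈ σ'.head ∧
      σ'.frontier.map p.1 = σ.frontier.map (fun v => gI Sg I (h v)) ∧ applyAtom p.1 p.2 ∈ I := by
    refine ⟨(h'', a), σ, hσ, ha, ?_, haI⟩
    apply List.map_inj_left.mpr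
    intro v hv
    exact hagree v (frontier_subset_bodyVars hv)
  obtain ⟨σ', hσ', ha', hfr', haI'⟩ := wChoose_spec hex
  rw [hσ] at hσ'
  cases Option.some.inj hσ'
  set u : List NTerm := σ.frontier.map (fun v => gI Sg I (h v)) with hu
  set h' := (wChoose Sg I i u).1 with hh'
  set a' := (wChoose Sg I i u).2 with ha'def
  refine ⟨a', ha', ?_⟩
  have heq : mapDFact (gI Sg I) (applyAtom (skolemSubD i σ h) a') = applyAtom h' a' := by
    simp only [mapDFact, applyAtom, List.map_map]
    congr 1
    apply List.map_congr_left
    intro x hx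
    cases x with
    | inr c => exact gI_const Sg I c
    | inl v =>
      simp only [Function.comp]
      by_cases hvb : v ∈ σ.bodyVars
      · have hsk : skolemSubD i σ h v = h v := if_pos hvb
        rw [hsk]
        have hvf : v ∈ σ.frontier := mem_frontier ha' (mem_atomVars.mpr hx) hvb
        exact (List.map_inj_left.mp hfr' v hvf).symm
      · have hsk : skolemSubD i σ h v = NTerm.sk i v (σ.frontier.map h) := if_neg hvb
        rw [hsk, gI, gmap_sk, List.map_map]
        rfl
  rw [heq]
  exact haI'

theorem gI_meets {Sg : List DTGD} {D I : Set DFact} (hD : IsDatabase D) (hDI : D ⊆ I)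
    (hmod : ∀ σ ∈ Sg, modelsDTGD I σ) :
    ∀ k, ∀ F ∈ ndChaseK Sg D k, ∃ f ∈ F, mapDFact (gI Sg I) f ∈ I := by
  intro k
  induction k with
  | zero =>
    rintro F ⟨f, hf, rfl⟩
    refine ⟨f, rfl, ?_⟩
    have hargs : ∀ t ∈ f.args, gI Sg I t = t := by
      intro t ht
      obtain ⟨c, rfl⟩ := hD.2 f hf t ht
      rfl
    have hmapargs : f.args.map (gI Sg I) = f.args := by
      conv_rhs => rw [← List.map_id f.args]
      exact List.map_congr_left hargs
    have : mapDFact (gI Sg I) f = f := by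
      show (⟨f.rel, f.args.map (gI Sg I)⟩ : DFact) = f
      rw [hmapargs]
    rw [this]
    exact hDI hf
  | succ k ih =>
    rintro F (hF | ⟨i, σ, hσ, h, Fs, hFs, rfl⟩)
    · exact ih F hF
    · classical
      by_cases hc : ∀ (j : ℕ) (a : Atom), σ.body[j]? = some a → mapDFact (gI Sg I) (applyAtom h a) ∈ I
      · have hbody : ∀ a ∈ σ.body, applyAtom (fun v => gI Sg I (h v)) a ∈ I := by
          intro a ha
          obtain ⟨j, hj⟩ := List.mem_iff_getElem?.mp ha
          have := hc j a hj
          rwa [show mapDFact (gI Sg I) (applyAtom h a)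
              = applyAtom (fun v => gI Sg I (h v)) a from mapDFact_applyAtom _ h a] at this
        obtain ⟨a, ha, haI⟩ := gI_head_step hmod hσ hbody
        exact ⟨applyAtom (skolemSubD i σ h) a, Or.inl ⟨a, ha, rfl⟩, haI⟩
      · push_neg at hc
        obtain ⟨j, a, hja, hnI⟩ := hc
        obtain ⟨f, hf, hfI⟩ := ih (Fs j) (hFs j a hja).1
        refine ⟨f, Or.inr ⟨j, a, hja, hf, ?_⟩, hfI⟩
        intro hfa
        rw [hfa] at hfI
        exact hnI hfI

/-- Soundness direction of the theorem. -/
theorem soundness_dir {Sg : List DTGD} {D : Set DFact} (hD : IsDatabase D) {q : BCQ}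
    (T : Set (ℕ → NTerm))
    (hT : ∀ M : Set DFact, IsNdModel (ndChase Sg D) M → ∃ s ∈ T, ∀ a ∈ q, applyAtom s a ∈ M) :
    dEntailsCQ Sg D q := by
  intro I hDI hmod
  set M : Set DFact := {f | mapDFact (gI Sg I) f ∈ I} with hM
  have hndM : IsNdModel (ndChase Sg D) M := by
    rintro F ⟨_, ⟨k, rfl⟩, hF⟩
    obtain ⟨f, hf, hfI⟩ := gI_meets hD hDI hmod k F hF
    exact ⟨f, hf, hfI⟩
  obtain ⟨s, _, hs⟩ := hT M hndM
  refine ⟨fun v => gI Sg I (s v), fun a ha => ?_⟩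
  have := hs a ha
  rw [hM, Set.mem_setOf_eq] at this
  rwa [show mapDFact (gI Sg I) (applyAtom s a)
      = applyAtom (fun v => gI Sg I (s v)) a from mapDFact_applyAtom _ s a] at this

/-! ### Completeness: minimal sub-models of the chase -/

theorem chain_inter_meets {F : Set DFact} (hFfin : F.Finite) {c : Set (Set DFact)}
    (hc : IsChain (· ⊆ ·) c) (hne : c.Nonempty) (hmeet : ∀ N ∈ c, (F ∩ N).Nonempty) :
    (F ∩ ⋂₀ c).Nonempty := by
  have hfam : ((fun N => F ∩ N) '' c).Finite :=
    Set.Finite.subset hFfin.finite_subsets (by rintro _ ⟨N, _, rfl⟩; exact Set.inter_subset_left)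
  obtain ⟨G₀, hG₀, hmin⟩ : ∃ G₀ ∈ (fun N => F ∩ N) '' c,
      ∀ G ∈ (fun N => F ∩ N) '' c, G ⊆ G₀ → G₀ = G := by
    obtain ⟨G₀, hG₀, hm⟩ := hfam.exists_minimal (hne.image _)
    exact ⟨G₀, hG₀, fun G hG hle => Set.Subset.antisymm (hm hG hle) hle⟩
  obtain ⟨N₀, hN₀c, rfl⟩ := hG₀
  obtain ⟨x, hxF, hxN₀⟩ := hmeet N₀ hN₀c
  refine ⟨x, hxF, ?_⟩
  intro N hN
  rcases eq_or_ne N₀ N with rfl | hne'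
  · exact hxN₀
  rcases hc hN₀c hN hne' with hsub | hsub
  · exact hsub hxN₀
  · have h1 : F ∩ N ⊆ F ∩ N₀ := Set.inter_subset_inter_right F hsub
    have h2 : (F ∩ N₀ : Set DFact) = F ∩ N :=
      hmin (F ∩ N) (Set.mem_image_of_mem _ hN) h1
    have hx : x ∈ F ∩ N₀ := ⟨hxF, hxN₀⟩
    rw [h2] at hx
    exact hx.2

/-- Every nd-model of the chase contains a minimal one, which is a model of `D` and `Σ`. -/
theorem exists_minimal_submodel {Sg : List DTGD} {D : Set DFact} {M : Set DFact}
    (hM : IsNdModel (ndChase Sg D) M) :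
    ∃ M₀ : Set DFact, M₀ ⊆ M ∩ ndAtoms (ndChase Sg D) ∧ D ⊆ M₀ ∧
      (∀ σ ∈ Sg, modelsDTGD M₀ σ) ∧ IsNdModel (ndChase Sg D) M₀ := by
  classical
  set S : Set (Set DFact) :=
    {N | N ⊆ M ∩ ndAtoms (ndChase Sg D) ∧ ∀ F ∈ ndChase Sg D, (F ∩ N).Nonempty} with hS
  have htop : M ∩ ndAtoms (ndChase Sg D) ∈ S := by
    refine ⟨le_refl _, fun F hF => ?_⟩
    obtain ⟨f, hfF, hfM⟩ := hM F hF
    exact ⟨f, hfF, hfM, ⟨F, hF, hfF⟩⟩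
  obtain ⟨M₀, hsub, hM₀S, hmin⟩ : ∃ M₀ ⊆ M ∩ ndAtoms (ndChase Sg D),
      M₀ ∈ S ∧ ∀ N ∈ S, N ⊆ M₀ → N = M₀ := by
    obtain ⟨m, hm, hmmin⟩ := zorn_superset_nonempty S (fun c hcS hchain hcne => by
      refine ⟨⋂₀ c, ⟨?_, fun F hF => ?_⟩, fun s hs => Set.sInter_subset_of_mem hs⟩
      · obtain ⟨N, hN⟩ := hcne
        exact (Set.sInter_subset_of_mem hN).trans (hcS hN).1
      · exact chain_inter_meets (ndChase_finite hF) hchain hcne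
          (fun N hN => (hcS hN).2 F hF)) _ htop
    exact ⟨m, hm, hmmin.prop, fun N hN hNm => hmmin.eq_of_le hN hNm⟩
  have hM₀meets : ∀ F ∈ ndChase Sg D, (F ∩ M₀).Nonempty := hM₀S.2
  -- every element of M₀ is "pinned" by some clause
  have hpin : ∀ f ∈ M₀, ∃ F ∈ ndChase Sg D, F ∩ M₀ = {f} := by
    intro f hf
    by_contra hcon
    push_neg at hcon
    have : M₀ \ {f} ∈ S := by
      refine ⟨(Set.diff_subset).trans hsub, fun F hF => ?_⟩
      obtain ⟨x, hxF, hxM₀⟩ := hM₀meets F hF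
      rcases eq_or_ne x f with rfl | hxf
      · -- F ∩ M₀ contains f; since F ∩ M₀ ≠ {f}, it contains another element
        have hne : F ∩ M₀ ≠ {x} := hcon F hF
        have : ∃ y ∈ F ∩ M₀, y ≠ x := by
          by_contra hall
          push_neg at hall
          exact hne (Set.eq_singleton_iff_unique_mem.mpr ⟨⟨hxF, hxM₀⟩, hall⟩)
        obtain ⟨y, ⟨hyF, hyM₀⟩, hyx⟩ := this
        exact ⟨y, hyF, hyM₀, hyx⟩
      · exact ⟨x, hxF, hxM₀, hxf⟩
    have heq := hmin _ this Set.diff_subset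
    rw [← heq] at hf
    exact hf.2 rfl
  have hDM₀ : D ⊆ M₀ := by
    intro f hf
    have h0 : ({f} : Set DFact) ∈ ndChase Sg D :=
      ndChaseK_subset Sg D 0 ⟨f, hf, rfl⟩
    obtain ⟨x, hx1, hx2⟩ := hM₀meets _ h0
    rw [Set.mem_singleton_iff] at hx1
    rwa [← hx1]
  refine ⟨M₀, hsub, hDM₀, ?_, hM₀meets⟩
  -- M₀ models every DTGD
  intro σ hσmem h hbody
  obtain ⟨i, hσ⟩ := List.mem_iff_getElem?.mp hσmem
  -- choose pinning clauses for each body atom, with levels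
  have hchoose : ∀ j : ℕ, ∃ (Fk : Set DFact × ℕ), ∀ a : Atom, σ.body[j]? = some a →
      Fk.1 ∈ ndChaseK Sg D Fk.2 ∧ Fk.1 ∩ M₀ = {applyAtom h a} := by
    intro j
    by_cases hj : ∃ a : Atom, σ.body[j]? = some a
    · obtain ⟨a, hja⟩ := hj
      have haM₀ : applyAtom h a ∈ M₀ := hbody a (List.mem_iff_getElem?.mpr ⟨j, hja⟩)
      obtain ⟨F, hFc, hFpin⟩ := hpin _ haM₀
      obtain ⟨k, hk⟩ := Set.mem_iUnion.mp hFc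
      refine ⟨(F, k), fun a' hja' => ?_⟩
      rw [hja] at hja'
      cases Option.some.inj hja'
      exact ⟨hk, hFpin⟩
    · exact ⟨(∅, 0), fun a hja => absurd ⟨a, hja⟩ hj⟩
  choose Fk hFk using hchoose
  set kmax := (Finset.range σ.body.length).sup (fun j => (Fk j).2) with hkmax
  have hG : ({ f | ∃ a ∈ σ.head, f = applyAtom (skolemSubD i σ h) a } ∪
      { f | ∃ j a, σ.body[j]? = some a ∧ f ∈ (fun j => (Fk j).1) j ∧ f ≠ applyAtom h a })
      ∈ ndChaseK Sg D (kmax + 1) := by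
    refine Or.inr ⟨i, σ, hσ, h, fun j => (Fk j).1, fun j a hja => ?_, rfl⟩
    have hj : j < σ.body.length := by
      by_contra hc
      rw [List.getElem?_eq_none (Nat.le_of_not_lt hc)] at hja
      cases hja
    have hle : (Fk j).2 ≤ kmax := Finset.le_sup (f := fun j => (Fk j).2) (Finset.mem_range.mpr hj)
    refine ⟨ndChaseK_mono Sg D hle (hFk j a hja).1, ?_⟩
    have := (hFk j a hja).2
    have : applyAtom h a ∈ (Fk j).1 ∩ M₀ := by rw [this]; rfl
    exact this.1
  obtain ⟨f, hfG, hfM₀⟩ := hM₀meets _ (ndChaseK_subset Sg D (kmax+1) hG)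
  rcases hfG with ⟨a, ha, rfl⟩ | ⟨j, a, hja, hfFk, hfne⟩
  · exact ⟨skolemSubD i σ h, fun v hv => if_pos hv, a, ha, hfM₀⟩
  · exfalso
    have : f ∈ (Fk j).1 ∩ M₀ := ⟨hfFk, hfM₀⟩
    rw [(hFk j a hja).2] at this
    exact hfne this

/-- Completeness for a single nd-model: entailment gives a witness inside `M`
with values among the chase terms. -/
theorem completeness_single {Sg : List DTGD} {D : Set DFact} {q : BCQ}
    (hent : dEntailsCQ Sg D q) {M : Set DFact} (hM : IsNdModel (ndChase Sg D) M) :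
    ∃ h : ℕ → NTerm, (∀ a ∈ q, applyAtom h a ∈ M) ∧
      ∀ v ∈ cqVars q, h v ∈ ndTerms (ndChase Sg D) := by
  obtain ⟨M₀, hsub, hDM₀, hmod, hM₀nd⟩ := exists_minimal_submodel hM
  obtain ⟨h, hh⟩ := hent M₀ hDM₀ hmod
  refine ⟨h, fun a ha => (hsub (hh a ha)).1, ?_⟩
  rintro v ⟨a, ha, hva⟩
  have hfa : applyAtom h a ∈ ndAtoms (ndChase Sg D) := (hsub (hh a ha)).2
  obtain ⟨F, hF, hfF⟩ := hfa
  refine ⟨F, hF, applyAtom h a, hfF, ?_⟩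
  show h v ∈ (applyAtom h a).args
  simp only [applyAtom]
  exact List.mem_map.mpr ⟨Sum.inl v, hva, rfl⟩

theorem completeness_dir {Sg : List DTGD} {D : Set DFact} {q : BCQ}
    (hent : dEntailsCQ Sg D q) :
    ∃ T : Set (ℕ → NTerm), T.Finite ∧
      (∀ s ∈ T, ∀ v ∈ cqVars q, s v ∈ ndTerms (ndChase Sg D)) ∧
      ∀ M : Set DFact, IsNdModel (ndChase Sg D) M →
        ∃ s ∈ T, ∀ a ∈ q, applyAtom s a ∈ M := by
  classical
  set GoodS := {s : ℕ → NTerm // ∀ v ∈ cqVars q, s v ∈ ndTerms (ndChase Sg D)} with hGS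
  set ι := {F : Set DFact // F ∈ ndChase Sg D} ⊕ GoodS with hι
  set Z : ι → Set (DFact → Bool) := fun i => match i with
    | Sum.inl F => {Mb | ∃ f ∈ F.1, Mb f = true}
    | Sum.inr s => {Mb | ¬ ∀ a ∈ q, Mb (applyAtom s.1 a) = true} with hZ
  have hopen : ∀ f : DFact, IsOpen {Mb : DFact → Bool | Mb f = true} := by
    intro f
    have : {Mb : DFact → Bool | Mb f = true} = (fun Mb : DFact → Bool => Mb f) ⁻¹' {true} := rfl
    rw [this]
    exact (continuous_apply f).isOpen_preimage _ (isOpen_discrete _)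
  have hZclosed : ∀ i, IsClosed (Z i) := by
    rintro (F | s)
    · have : Z (Sum.inl F) = ⋃ f ∈ F.1, {Mb : DFact → Bool | Mb f = true} := by
        ext Mb; simp [hZ]
      rw [this]
      apply Set.Finite.isClosed_biUnion (ndChase_finite F.2)
      intro f _
      have : {Mb : DFact → Bool | Mb f = true} = (fun Mb : DFact → Bool => Mb f) ⁻¹' {true} := rfl
      rw [this]
      exact IsClosed.preimage (continuous_apply f) (isClosed_discrete _)
    · have : Z (Sum.inr s) = (⋂ a ∈ {a | a ∈ q}, {Mb : DFact → Bool | Mb (applyAtom s.1 a) = true})ᶜ := by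
        ext Mb; simp [hZ]
      rw [this]
      apply IsOpen.isClosed_compl
      exact Set.Finite.isOpen_biInter (q.finite_toSet) (fun a _ => hopen _)
  have hempty : (Set.univ : Set (DFact → Bool)) ∩ ⋂ i, Z i = ∅ := by
    by_contra hne
    obtain ⟨Mb, hMb⟩ := Set.nonempty_iff_ne_empty.mpr hne
    have hMbZ : ∀ i, Mb ∈ Z i := Set.mem_iInter.mp hMb.2
    set M' : Set DFact := {f | Mb f = true} with hM'
    have hM'nd : IsNdModel (ndChase Sg D) M' := by
      intro F hF
      obtain ⟨f, hfF, hft⟩ := hMbZ (Sum.inl ⟨F, hF⟩)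
      exact ⟨f, hfF, hft⟩
    obtain ⟨h, hhM, hhterms⟩ := completeness_single hent hM'nd
    set s : ℕ → NTerm := fun v => if v ∈ cqVars q then h v else NTerm.const 0 with hs
    have hsgood : ∀ v ∈ cqVars q, s v ∈ ndTerms (ndChase Sg D) := by
      intro v hv
      rw [hs]; simp only [if_pos hv]
      exact hhterms v hv
    have hsame : ∀ a ∈ q, applyAtom s a = applyAtom h a := by
      intro a ha
      simp only [applyAtom]
      congr 1
      apply List.map_congr_left
      intro x hx
      cases x with
      | inr c => rfl
      | inl v =>
        have hv : v ∈ cqVars q := ⟨a, ha, hx⟩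
        simp only [hs, if_pos hv]
    have := hMbZ (Sum.inr ⟨s, hsgood⟩)
    apply this
    intro a ha
    rw [hsame a ha]
    exact hhM a ha
  obtain ⟨u, hu⟩ := (isCompact_univ (X := DFact → Bool)).elim_finite_subfamily_closed Z hZclosed hempty
  set T : Set (ℕ → NTerm) := (fun x : GoodS => x.1) '' {x | Sum.inr x ∈ u} with hT
  have hTfin : T.Finite := by
    apply Set.Finite.image
    have : {x : GoodS | Sum.inr x ∈ u} ⊆ Sum.inr ⁻¹' (u : Set ι) := fun x hx => hx
    exact Set.Finite.subset (Set.Finite.preimage (Set.injOn_of_injective Sum.inr_injective)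
      u.finite_toSet) this
  refine ⟨T, hTfin, ?_, ?_⟩
  · rintro s ⟨x, _, rfl⟩
    exact x.2
  · intro M hMnd
    set Mb : DFact → Bool := fun f => if f ∈ M then true else false with hMb
    have hMbmem : ∀ f, Mb f = true ↔ f ∈ M := by
      intro f; rw [hMb]; by_cases hf : f ∈ M <;> simp [hf]
    have : Mb ∉ ⋂ i ∈ u, Z i := by
      intro hc
      have : Mb ∈ (Set.univ : Set (DFact → Bool)) ∩ ⋂ i ∈ u, Z i := ⟨trivial, hc⟩
      rw [hu] at this
      exact this
    have hex : ∃ i ∈ u, Mb ∉ Z i := by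
      by_contra hcon
      push_neg at hcon
      exact this (Set.mem_iInter₂.mpr hcon)
    obtain ⟨i, hiu, hiZ⟩ := hex
    match i with
    | Sum.inl F =>
      exfalso
      apply hiZ
      obtain ⟨f, hfF, hfM⟩ := hMnd F.1 F.2
      exact ⟨f, hfF, (hMbmem f).mpr hfM⟩
    | Sum.inr x =>
      refine ⟨x.1, ⟨x, hiu, rfl⟩, ?_⟩
      intro a ha
      by_contra hc
      exact hiZ (fun haq => absurd ((hMbmem _).mp (haq a ha) : applyAtom x.1 a ∈ M) hc)

/-- `D ∪ Σ ⊨ ∃x φ(x)` iff some finite set `T` of assignments of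
chase terms to the variables makes the ground disjunction `⋁_{t∈T} φ(t)` a
logical consequence of the nondeterministic chase. -/
theorem dtgd_entailment_iff_finite_ground_disjunction (Sg : List DTGD)
    (D : Set DFact) (hD : IsDatabase D) (q : BCQ) :
    dEntailsCQ Sg D q ↔
      ∃ T : Set (ℕ → NTerm), T.Finite ∧
        (∀ s ∈ T, ∀ v ∈ cqVars q, s v ∈ ndTerms (ndChase Sg D)) ∧
        ∀ M : Set DFact, IsNdModel (ndChase Sg D) M →
          ∃ s ∈ T, ∀ a ∈ q, applyAtom s a ∈ M := by
  constructor
  · exact completeness_dir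
  · rintro ⟨T, _, _, hT⟩
    exact soundness_dir hD T hT
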